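/- Let p be a prime and let n > 1, k ≥ 1, and h be integers with 1 ≤ h < n. Then ((p^k - 1)/(p-1)) · p^n - k - h is not in the image of Z_p. -/

import Mathlib

/-!
Put `m₀ = p ^ n * (p ^ k - 1)`. Legendre's recursion `Z_p(p m) = Z_p(m) + m` gives
`Z_p(m₀) = S p ^ n - k` with `S = 1 + p + ⋯ + p ^ (k - 1) = (p ^ k - 1) / (p - 1)`, while
`v_p(m₀) = n` makes `Z_p` jump by exactly `n` from `m₀ - 1` to `m₀`. Since `Z_p` is monotone, the
values `Z_p(m₀) - h` with `0 < h < n` are skipped.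
-/

/-- `Z b n` is the number of trailing zeroes of the base-`b` expansion of `n!`,
i.e. the largest `k` such that `b ^ k ∣ n!`. -/
def Z (b n : ℕ) : ℕ := padicValNat b (Nat.factorial n)

open Finset

lemma not_dvd_pow_sub_one {p k : ℕ} (hp : 2 ≤ p) (hk : k ≠ 0) : ¬p ∣ p ^ k - 1 := by
  intro hd
  have h := Nat.dvd_sub (dvd_pow_self p hk) hd
  rw [Nat.sub_sub_self (Nat.one_le_pow _ _ (by omega))] at h
  exact absurd (Nat.le_of_dvd one_pos h) (by omega)

section

variable {p : ℕ} [hp : Fact p.Prime]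

lemma padicValNat_pow_mul_pow_sub_one (n : ℕ) {k : ℕ} (hk : k ≠ 0) :
    padicValNat p (p ^ n * (p ^ k - 1)) = n := by
  have hpos : 0 < p ^ k - 1 := Nat.sub_pos_of_lt (Nat.one_lt_pow hk hp.out.one_lt)
  rw [padicValNat.mul (pow_ne_zero _ hp.out.ne_zero) hpos.ne', padicValNat.prime_pow,
    padicValNat.eq_zero_of_not_dvd (not_dvd_pow_sub_one hp.out.two_le hk), add_zero]

lemma Z_succ (m : ℕ) : Z p (m + 1) = Z p m + padicValNat p (m + 1) := by
  rw [Z, Z, Nat.factorial_succ, padicValNat.mul m.succ_ne_zero m.factorial_ne_zero, add_comm]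

lemma Z_monotone : Monotone (Z p) :=
  monotone_nat_of_le_succ fun m => (Z_succ (p := p) m).symm ▸ Nat.le_add_right _ _

lemma Z_pow_mul (j m : ℕ) : Z p (p ^ j * m) = m * ∑ i ∈ range j, p ^ i + Z p m := by
  induction j with
  | zero => simp
  | succ j ih =>
    rw [pow_succ', mul_assoc, Z, padicValNat_factorial_mul, ← Z, ih, sum_range_succ]
    ring

lemma Z_pow_sub_one_add (k : ℕ) : Z p (p ^ k - 1) + k = ∑ i ∈ range k, p ^ i := by
  have h := Z_succ (p := p) (p ^ k - 1)
  rw [Nat.sub_add_cancel (Nat.one_le_pow _ _ hp.out.pos), padicValNat.prime_pow] at h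
  calc Z p (p ^ k - 1) + k = Z p (p ^ k) := h.symm
    _ = ∑ i ∈ range k, p ^ i := by simpa [Z] using Z_pow_mul (p := p) k 1

lemma Z_pow_mul_pow_sub_one_add (n k : ℕ) :
    Z p (p ^ n * (p ^ k - 1)) + k = (∑ i ∈ range k, p ^ i) * p ^ n := by
  have geom (j : ℕ) : (∑ i ∈ range j, p ^ i) * (p - 1) = p ^ j - 1 :=
    geom_sum_mul_of_one_le hp.out.one_lt.le j
  have hpn : 1 ≤ p ^ n := Nat.one_le_pow _ _ hp.out.pos
  calc Z p (p ^ n * (p ^ k - 1)) + k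
      = (p ^ k - 1) * ∑ i ∈ range n, p ^ i + ∑ i ∈ range k, p ^ i := by
        rw [Z_pow_mul, add_assoc, Z_pow_sub_one_add]
    _ = (∑ i ∈ range k, p ^ i) * ((∑ i ∈ range n, p ^ i) * (p - 1) + 1) := by
        rw [← geom k]; ring
    _ = (∑ i ∈ range k, p ^ i) * p ^ n := by rw [geom, Nat.sub_add_cancel hpn]

end

theorem family_b_not_in_image_general (p n k h : ℕ) (hp : p.Prime)
    (hk : 1 ≤ k) (hh1 : 1 ≤ h) (hhn : h < n) :
    ((p ^ k - 1) / (p - 1)) * p ^ n - k - h ∉ Set.range (Z p) := by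
  have := Fact.mk hp
  have hm₀ : p ^ n * (p ^ k - 1) ≠ 0 := mul_ne_zero (pow_ne_zero _ hp.ne_zero)
    (Nat.sub_pos_of_lt (Nat.one_lt_pow (by omega) hp.one_lt)).ne'
  obtain ⟨m, hm⟩ := Nat.exists_eq_add_one_of_ne_zero hm₀
  have hZ : Z p (m + 1) + k = (∑ i ∈ range k, p ^ i) * p ^ n :=
    hm ▸ Z_pow_mul_pow_sub_one_add n k
  have hstep : Z p (m + 1) = Z p m + n := by
    rw [Z_succ, ← hm, padicValNat_pow_mul_pow_sub_one n (by omega)]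
  rw [← Nat.geomSum_eq hp.two_le]
  rintro ⟨a, ha⟩
  exact Z_monotone.ne_of_lt_of_lt_nat m (by omega) (by omega) a ha

theorem family_b_not_in_image (p n k h : ℕ) (hp : p.Prime) (hn : 1 < n)
    (hk : 1 ≤ k) (hh1 : 1 ≤ h) (hhn : h < n) :
    ((p ^ k - 1) / (p - 1)) * p ^ n - k - h ∉ Set.range (Z p) :=
  family_b_not_in_image_general p n k h hp hk hh1 hhn
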